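/- Let α = (√5 - 1)/2 and let β be the unique real number in (0,1) with 1 - β - β² + β³ - β⁴ = 0. Let n ≥ 0 be a natural number and suppose β^(2^(-n)) < q < α^(2^(-n-1)). Then the greedy shooting sequence satisfies a_q(N) = t_N for all 0 ≤ N < 3·2^(n+1), and a_q(3·2^(n+1)) ≠ t_{3·2^(n+1)}. -/

import Mathlib

/-- The Thue-Morse sequence: `tm n = (-1)^(s₂ n)` where `s₂ n` is the sum of the
binary digits of `n`. -/
def tm (n : ℕ) : ℤ := (-1) ^ (Nat.digits 2 n).sum

/-- The partial sums `S q n = ∑_{0 ≤ j < n} tm j * q^j`. -/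
noncomputable def S (q : ℝ) (n : ℕ) : ℝ := ∑ j ∈ Finset.range n, (tm j : ℝ) * q ^ j

/-- The greedy shooting sequence: `a q N = 1` if `∑_{0 ≤ j < N} a q j * q^j ≤ 0`,
and `a q N = -1` otherwise. -/
noncomputable def a (q : ℝ) : ℕ → ℤ
  | N => if (∑ j : Fin N, (a q j : ℝ) * q ^ (j : ℕ)) ≤ 0 then 1 else -1
decreasing_by all_goals exact j.isLt

/-!
The invariant `TMBound q m`: `(1 - q) S q m` lies in `(-q^m, 0]` when `t_m = 1` and in
`(0, q^m]` when `t_m = -1`. Its sign part is exactly what makes the greedy sequence pick `t_m`.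
Since `t_{2m} = t_m` and `t_{2m+1} = -t_m`, we have `S q (2m) = (1 - q) S (q²) m`, and the
invariant on `[0, M)` together with `0 < S · M` passes from `q²` to `q` on `[0, 2M)` whenever
`1/2 ≤ q < 1`. As `S x 3 = 1 - x - x²` and `S x 5 = 1 - x - x² + x³ - x⁴`, the bounds on `q` say
that `r = q^(2^n)` satisfies `S r 5 < 0 < S (r²) 3`, which gives the invariant on `[0, 6)` and
`0 < S r 6 = (1 - r) S (r²) 3`; doubling `n` times gives it for `q` on `[0, 3·2^(n+1))`, and then
`0 < S q (3·2^(n+1))` makes the greedy sequence pick `-1 ≠ t_{3·2^(n+1)} = 1`.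
-/

lemma tm_eq_one_or_neg_one (m : ℕ) : tm m = 1 ∨ tm m = -1 :=
  (Nat.even_or_odd _).imp Even.neg_one_pow Odd.neg_one_pow

lemma tm_two_mul (m : ℕ) : tm (2 * m) = tm m := by
  rcases Nat.eq_zero_or_pos m with rfl | hm
  · rfl
  · rw [tm, tm, Nat.digits_def' (by norm_num) (by omega)]
    simp

lemma tm_two_mul_add_one (m : ℕ) : tm (2 * m + 1) = -tm m := by
  rw [tm, tm, Nat.digits_def' (by norm_num) (by omega)]
  simp [Nat.mul_add_div, pow_add]

lemma tm_two_pow_mul (k m : ℕ) : tm (2 ^ k * m) = tm m := by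
  induction k with
  | zero => simp
  | succ k ih => rw [pow_succ', mul_assoc, tm_two_mul, ih]

lemma S_succ (q : ℝ) (m : ℕ) : S q (m + 1) = S q m + tm m * q ^ m :=
  Finset.sum_range_succ _ _

lemma S_two_mul (q : ℝ) (m : ℕ) : S q (2 * m) = (1 - q) * S (q ^ 2) m := by
  induction m with
  | zero => simp [S]
  | succ m ih =>
    rw [Nat.mul_succ, S_succ, S_succ, tm_two_mul_add_one, tm_two_mul, ih, S_succ,
      pow_succ, pow_mul]
    push_cast
    ring

def TMBound (q : ℝ) (m : ℕ) : Prop :=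
  (tm m = 1 → -q ^ m < (1 - q) * S q m ∧ S q m ≤ 0) ∧
    (tm m = -1 → 0 < S q m ∧ (1 - q) * S q m ≤ q ^ m)

lemma TMBound.tm_eq {q : ℝ} {m : ℕ} (h : TMBound q m) :
    tm m = if S q m ≤ 0 then 1 else -1 := by
  rcases tm_eq_one_or_neg_one m with ht | ht
  · rw [if_pos (h.1 ht).2, ht]
  · rw [if_neg (h.2 ht).1.not_ge, ht]

section Doubling

variable {q : ℝ} {m : ℕ}

lemma TMBound.two_mul (hq0 : 0 < q) (hq1 : q < 1) (h : TMBound (q ^ 2) m) :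
    TMBound q (2 * m) := by
  have hp : 0 < (q ^ 2) ^ m := by positivity
  unfold TMBound at h ⊢
  rw [tm_two_mul, S_two_mul, pow_mul]
  refine ⟨fun ht => ?_, fun ht => ?_⟩
  · obtain ⟨hlow, hsign⟩ := h.1 ht
    refine ⟨?_, mul_nonpos_of_nonneg_of_nonpos (by linarith) hsign⟩
    nlinarith [mul_nonpos_of_nonneg_of_nonpos (by nlinarith : 0 ≤ 2 * q * (1 - q)) hsign]
  · obtain ⟨hsign, hup⟩ := h.2 ht
    refine ⟨mul_pos (by linarith) hsign, ?_⟩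
    nlinarith [mul_nonneg (by nlinarith : 0 ≤ 2 * q * (1 - q)) hsign.le]

lemma TMBound.two_mul_add_one (hhalf : 1 / 2 ≤ q) (hq1 : q < 1) (h : TMBound (q ^ 2) m) :
    TMBound q (2 * m + 1) := by
  have hp : 0 < (q ^ 2) ^ m := by positivity
  unfold TMBound at h ⊢
  rw [tm_two_mul_add_one, S_succ, tm_two_mul, S_two_mul, pow_succ, pow_mul]
  rcases tm_eq_one_or_neg_one m with ht | ht
  · obtain ⟨hlow, hsign⟩ := h.1 ht
    refine ⟨fun h' => by simp [ht] at h', fun _ => ?_⟩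
    rw [ht, Int.cast_one]
    constructor
    · nlinarith
    · nlinarith [mul_nonpos_of_nonneg_of_nonpos (sq_nonneg (1 - q)) hsign]
  · obtain ⟨hsign, hup⟩ := h.2 ht
    refine ⟨fun _ => ?_, fun h' => by simp [ht] at h'⟩
    rw [ht, Int.cast_neg, Int.cast_one]
    constructor
    · nlinarith [mul_pos (by nlinarith : 0 < q * (1 - q)) hsign]
    · nlinarith [mul_pos (by nlinarith : 0 < (1 - q) ^ 2) hsign]

lemma tmBound_of_sq {M : ℕ} (hhalf : 1 / 2 ≤ q) (hq1 : q < 1)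
    (hB : ∀ m < M, TMBound (q ^ 2) m) (hS : 0 < S (q ^ 2) M) :
    (∀ m < 2 * M, TMBound q m) ∧ 0 < S q (2 * M) := by
  refine ⟨fun N hN => ?_, by rw [S_two_mul]; exact mul_pos (by linarith) hS⟩
  obtain ⟨m, rfl | rfl⟩ := Nat.even_or_odd' N
  · exact (hB m (by omega)).two_mul (by linarith) hq1
  · exact (hB m (by omega)).two_mul_add_one hhalf hq1

lemma tmBound_of_pow_two_pow {M : ℕ} (n : ℕ) (hq0 : 0 ≤ q) (hq1 : q < 1)
    (hhalf : 1 / 2 ≤ q ^ 2 ^ n)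
    (hB : ∀ m < M, TMBound (q ^ 2 ^ n) m) (hS : 0 < S (q ^ 2 ^ n) M) :
    (∀ m < 2 ^ n * M, TMBound q m) ∧ 0 < S q (2 ^ n * M) := by
  induction n generalizing q with
  | zero => simp_all
  | succ n ih =>
    have hq_half : 1 / 2 ≤ q := hhalf.trans (pow_le_of_le_one hq0 hq1.le (by positivity))
    rw [pow_succ', pow_mul] at hhalf hB hS
    obtain ⟨hB', hS'⟩ := ih (sq_nonneg q) (by nlinarith) hhalf hB hS
    rw [pow_succ', mul_assoc]
    exact tmBound_of_sq hq_half hq1 hB' hS'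

end Doubling

lemma S_three (x : ℝ) : S x 3 = 1 - x - x ^ 2 := by
  norm_num [S, Finset.sum_range_succ, tm]
  ring

lemma S_five (x : ℝ) : S x 5 = 1 - x - x ^ 2 + x ^ 3 - x ^ 4 := by
  norm_num [S, Finset.sum_range_succ, tm]
  ring

lemma tmBound_of_lt_six {q : ℝ} (hq0 : 0 < q) (hq1 : q < 1) (h5 : S q 5 ≤ 0)
    (h6 : 0 < S q 6) : ∀ m < 6, TMBound q m := by
  have h6' : 0 < S q 5 + q ^ 5 := by simpa [S_succ, tm] using h6
  rw [S_five] at h5 h6'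
  have h3 : 1 - q - q ^ 2 ≤ 0 := by nlinarith [pow_pos hq0 3]
  intro m hm
  interval_cases m <;> norm_num [TMBound, tm, S, Finset.sum_range_succ] <;>
    (try refine ⟨?_, ?_⟩) <;> nlinarith [pow_pos hq0 3]

lemma S_five_neg_of_root_lt {β r : ℝ} (hβ0 : 0 < β) (hβ : 1 - β - β ^ 2 + β ^ 3 - β ^ 4 = 0)
    (hβr : β < r) : S r 5 < 0 := by
  have hr : 0 < r := hβ0.trans hβr
  have hg : 0 < 1 + r + β - r ^ 2 - r * β - β ^ 2 + r ^ 3 + r ^ 2 * β + r * β ^ 2 + β ^ 3 := by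
    nlinarith [mul_pos hr hβ0, mul_pos (mul_pos hr hβ0) hβ0, mul_pos (mul_pos hr hβ0) hr,
      sq_nonneg (r - 1), sq_nonneg (β - 1), sq_nonneg (r - β), pow_pos hβ0 3, pow_pos hr 3]
  rw [S_five]
  -- `S r 5 = S r 5 - S β 5` is `-(r - β)` times the factor in `hg`
  nlinarith [mul_pos (sub_pos.2 hβr) hg]

lemma S_three_pos_of_lt {x : ℝ} (hx0 : 0 ≤ x) (hx : x < (Real.sqrt 5 - 1) / 2) : 0 < S x 3 := by
  have h5 : Real.sqrt 5 ^ 2 = 5 := Real.sq_sqrt (by norm_num)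
  rw [S_three]
  nlinarith [Real.sqrt_nonneg 5]

lemma half_le_and_lt_one {q : ℝ} (hq0 : 0 < q) (h5 : S q 5 < 0) (h3 : 0 < S (q ^ 2) 3) :
    1 / 2 ≤ q ∧ q < 1 := by
  rw [S_five] at h5
  rw [S_three] at h3
  have hq1 : q < 1 := by nlinarith
  exact ⟨by nlinarith [mul_pos (pow_pos hq0 3) (sub_pos.2 hq1)], hq1⟩

lemma rpow_two_zpow_neg_lt_iff {x y : ℝ} (hx : 0 ≤ x) (hy : 0 ≤ y) (n : ℕ) :
    x ^ (2 : ℝ) ^ (-(n : ℤ)) < y ↔ x < y ^ 2 ^ n := by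
  rw [zpow_neg, zpow_natCast, Real.rpow_inv_lt_iff_of_pos hx hy (by positivity)]
  norm_cast

lemma lt_rpow_two_zpow_neg_sub_one_iff {x y : ℝ} (hx : 0 ≤ x) (hy : 0 ≤ y) (n : ℕ) :
    x < y ^ (2 : ℝ) ^ (-(n : ℤ) - 1) ↔ (x ^ 2 ^ n) ^ 2 < y := by
  rw [← neg_add', zpow_neg, ← Nat.cast_succ, zpow_natCast,
    Real.lt_rpow_inv_iff_of_pos hx hy (by positivity), ← pow_mul, ← pow_succ]
  norm_cast

lemma sum_a_eq_S {q : ℝ} {N : ℕ} (h : ∀ j < N, a q j = tm j) :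
    ∑ j : Fin N, (a q j : ℝ) * q ^ (j : ℕ) = S q N := by
  rw [Fin.sum_univ_eq_sum_range (fun j => (a q j : ℝ) * q ^ j), S]
  exact Finset.sum_congr rfl fun j hj => by rw [h j (Finset.mem_range.1 hj)]

lemma a_eq_ite_S {q : ℝ} {N : ℕ} (h : ∀ j < N, a q j = tm j) :
    a q N = if S q N ≤ 0 then 1 else -1 := by
  rw [a, sum_a_eq_S h]

lemma a_eq_tm_of_forall {q : ℝ} {M : ℕ} (h : ∀ m < M, tm m = if S q m ≤ 0 then 1 else -1) :
    ∀ N < M, a q N = tm N := by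
  intro N
  induction N using Nat.strong_induction_on with
  | _ N ih =>
    intro hN
    rw [a_eq_ite_S fun j hj => ih j hj (hj.trans hN), h N hN]

theorem main_greedy_three_general (β : ℝ) (hβ0 : 0 < β)
    (hβ : 1 - β - β ^ 2 + β ^ 3 - β ^ 4 = 0)
    (n : ℕ) (q : ℝ)
    (hq0 : β ^ ((2 : ℝ) ^ (-(n : ℤ))) < q)
    (hq1 : q < ((Real.sqrt 5 - 1) / 2) ^ ((2 : ℝ) ^ (-(n : ℤ) - 1))) :
    (∀ N < 3 * 2 ^ (n + 1), a q N = tm N) ∧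
      a q (3 * 2 ^ (n + 1)) ≠ tm (3 * 2 ^ (n + 1)) := by
  have hq : 0 < q := (Real.rpow_pos_of_pos hβ0 _).trans hq0
  have hα : 0 < (Real.sqrt 5 - 1) / 2 := by
    nlinarith [Real.sqrt_nonneg 5, Real.sq_sqrt (show (0 : ℝ) ≤ 5 by norm_num)]
  have hβr := (rpow_two_zpow_neg_lt_iff hβ0.le hq.le n).1 hq0
  have hS3 := S_three_pos_of_lt (sq_nonneg _)
    ((lt_rpow_two_zpow_neg_sub_one_iff hq.le hα.le n).1 hq1)
  set r := q ^ 2 ^ n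
  have hS5 := S_five_neg_of_root_lt hβ0 hβ hβr
  obtain ⟨hhalf, hr1⟩ := half_le_and_lt_one (by positivity) hS5 hS3
  have hS6 : 0 < S r 6 := by
    rw [show 6 = 2 * 3 from rfl, S_two_mul]
    exact mul_pos (sub_pos.2 hr1) hS3
  obtain ⟨hB, hS⟩ := tmBound_of_pow_two_pow n hq.le
    ((pow_lt_one_iff_of_nonneg hq.le (by positivity)).1 hr1) hhalf
    (tmBound_of_lt_six (by positivity) hr1 hS5.le hS6) hS6
  have hagree := a_eq_tm_of_forall fun m hm => (hB m hm).tm_eq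
  rw [show 3 * 2 ^ (n + 1) = 2 ^ n * 6 by ring]
  refine ⟨hagree, ?_⟩
  rw [a_eq_ite_S hagree, if_neg hS.not_ge, tm_two_pow_mul]
  norm_num [tm]

theorem main_greedy_three (β : ℝ) (hβ0 : 0 < β) (hβ1 : β < 1)
    (hβ : 1 - β - β ^ 2 + β ^ 3 - β ^ 4 = 0)
    (n : ℕ) (q : ℝ)
    (hq0 : β ^ ((2 : ℝ) ^ (-(n : ℤ))) < q)
    (hq1 : q < ((Real.sqrt 5 - 1) / 2) ^ ((2 : ℝ) ^ (-(n : ℤ) - 1))) :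
    (∀ N < 3 * 2 ^ (n + 1), a q N = tm N) ∧
      a q (3 * 2 ^ (n + 1)) ≠ tm (3 * 2 ^ (n + 1)) :=
  main_greedy_three_general β hβ0 hβ n q hq0 hq1
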